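/- Let k be a field and A = k[x,y]/(xy). Then the group of k-algebra automorphisms of A is isomorphic to (k^× × k^×) ⋊ ℤ/2, where (α,β) acts by x ↦ αx, y ↦ βy and the generator of ℤ/2 acts by exchanging x and y. In particular, every k-algebra automorphism F of A satisfies either F(x) = αx and F(y) = βy, or F(x) = αy and F(y) = βx, for some α, β ∈ k^×. -/

import Mathlib

noncomputable section
open MvPolynomial

/-- The algebra `k[x,y]/(xy)`. -/
abbrev Axy (k : Type) [Field k] : Type :=
  MvPolynomial (Fin 2) k ⧸ Ideal.span {(X 0 : MvPolynomial (Fin 2) k) * X 1}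

/-- The class of `x` in `k[x,y]/(xy)`. -/
def xbar (k : Type) [Field k] : Axy k := Ideal.Quotient.mk _ (X 0)

/-- The class of `y` in `k[x,y]/(xy)`. -/
def ybar (k : Type) [Field k] : Axy k := Ideal.Quotient.mk _ (X 1)

/-- The action of `ℤ/2` on `kˣ × kˣ` whose generator swaps the two factors. -/
def swapHom (k : Type) [Field k] : Multiplicative (ZMod 2) →* MulAut (kˣ × kˣ) where
  toFun g := (MulEquiv.prodComm : (kˣ × kˣ) ≃* (kˣ × kˣ)) ^ (Multiplicative.toAdd g).val
  map_one' := by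
    have h : (Multiplicative.toAdd (1 : Multiplicative (ZMod 2))).val = 0 := rfl
    try dsimp only
    rw [h, pow_zero]
  map_mul' a b := by
    have h2 : (MulEquiv.prodComm : (kˣ × kˣ) ≃* (kˣ × kˣ)) ^ 2 = 1 := by
      rw [pow_two]
      ext x <;> rfl
    have hval : (Multiplicative.toAdd (a * b)).val =
        ((Multiplicative.toAdd a).val + (Multiplicative.toAdd b).val) % 2 := by
      rw [toAdd_mul]
      exact ZMod.val_add _ _
    try dsimp only
    rw [hval, ← pow_eq_pow_mod _ h2, pow_add]

/-!
`k[x,y]/(xy)` embeds into `k[t] × k[t]` through its two branches `projX : x ↦ t, y ↦ 0` and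
`projY : x ↦ 0, y ↦ t`, and the two images of an element have the same value at `t = 0`.
For an automorphism `F`, the relation `F x * F y = 0` forces, on each branch, one of `F x`, `F y`
to vanish; as `F x, F y ≠ 0`, up to composing with the swap `x ↔ y` we get
`projX (F y) = 0 = projY (F x)`. Then `projX ∘ F` is onto `k[t]` and kills `y`, so `projX (F x)`
alone generates `k[t]`, hence has degree one; it vanishes at `0` because `projY (F x)` does.
So `F x = α x`, and likewise `F y = β y`. The scalings and the swap then realise
`(kˣ × kˣ) ⋊ ℤ/2` faithfully as the whole automorphism group.
-/

open scoped Polynomial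

theorem MvPolynomial.coeff_aeval_piSingle_X {σ R : Type*} [CommSemiring R] [DecidableEq σ]
    (i : σ) (f : MvPolynomial σ R) (n : ℕ) :
    (aeval (Pi.single i (Polynomial.X : R[X])) f).coeff n = f.coeff (Finsupp.single i n) := by
  induction f using MvPolynomial.induction_on' with
  | add p q hp hq => simp [hp, hq]
  | monomial m c =>
    by_cases hm : m = Finsupp.single i (m i)
    · rw [hm, aeval_monomial, Finsupp.prod_single_index (by simp), coeff_monomial]
      simp [Polynomial.coeff_X_pow, (Finsupp.single_injective i).eq_iff, eq_comm]
    · obtain ⟨j, hji, hj⟩ : ∃ j, j ≠ i ∧ m j ≠ 0 := by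
        by_contra! h
        refine hm (Finsupp.ext fun j => ?_)
        rcases eq_or_ne j i with rfl | hji
        · simp
        · simp [hji.symm, h j hji]
      have hprod : m.prod (fun j e => (Pi.single i Polynomial.X : σ → R[X]) j ^ e) = 0 :=
        Finset.prod_eq_zero (Finsupp.mem_support_iff.mpr hj) (by simp [hji, zero_pow hj])
      rw [aeval_monomial, hprod, mul_zero, coeff_monomial, if_neg]
      · simp
      · rintro rfl
        simp [hji] at hj

theorem Polynomial.natDegree_eq_one_of_adjoin_singleton_eq_top {R : Type*} [CommRing R]
    [IsDomain R] {p : R[X]} (hp : Algebra.adjoin R {p} = ⊤) : p.natDegree = 1 := by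
  have hX : (Polynomial.X : R[X]) ∈ Algebra.adjoin R {p} := hp ▸ Algebra.mem_top
  obtain ⟨r, hr⟩ := (AlgHom.mem_range _).mp (Algebra.adjoin_singleton_eq_range_aeval R p ▸ hX)
  have hdeg : r.natDegree * p.natDegree = 1 := by
    rw [← Polynomial.natDegree_comp, Polynomial.comp_eq_aeval, hr, Polynomial.natDegree_X]
  exact Nat.eq_one_of_mul_eq_one_left hdeg

theorem Polynomial.exists_unit_smul_X_of_adjoin_singleton_eq_top {K : Type*} [Field K]
    {p : K[X]} (hp : Algebra.adjoin K {p} = ⊤) (h0 : p.coeff 0 = 0) :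
    ∃ a : Kˣ, p = (a : K) • Polynomial.X := by
  have h1 := Polynomial.natDegree_eq_one_of_adjoin_singleton_eq_top hp
  have hlead : p.coeff 1 ≠ 0 := by
    rw [← h1]
    exact Polynomial.leadingCoeff_ne_zero.mpr
      (Polynomial.ne_zero_of_natDegree_gt (n := 0) (by omega))
  refine ⟨Units.mk0 _ hlead, ?_⟩
  conv_lhs => rw [Polynomial.eq_X_add_C_of_natDegree_le_one h1.le, h0]
  simp [Polynomial.smul_eq_C_mul]

theorem Algebra.adjoin_apply_eq_top_of_surjective {R A B : Type*} [CommSemiring R] [Semiring A]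
    [Semiring B] [Algebra R A] [Algebra R B] {u v : A} (huv : Algebra.adjoin R {u, v} = ⊤)
    {G : A →ₐ[R] B} (hG : Function.Surjective G) (hv : G v = 0) :
    Algebra.adjoin R {G u} = ⊤ := by
  rw [← (AlgHom.range_eq_top G).mpr hG, ← Algebra.map_top, ← huv, AlgHom.map_adjoin,
    Set.image_pair, hv, Set.pair_comm, Algebra.adjoin_insert_zero]

def powZModTwoHom {M : Type*} [Monoid M] (s : M) (hs : s * s = 1) :
    Multiplicative (ZMod 2) →* M where
  toFun g := s ^ (Multiplicative.toAdd g).val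
  map_one' := pow_zero s
  map_mul' a b := by
    rw [toAdd_mul, ZMod.val_add, ← pow_eq_pow_mod _ (by rwa [sq]), pow_add]

@[simp]
theorem powZModTwoHom_ofAdd_one {M : Type*} [Monoid M] (s : M) (hs : s * s = 1) :
    powZModTwoHom s hs (Multiplicative.ofAdd 1) = s :=
  pow_one s

theorem Multiplicative.zmodTwo_eq_one_or_eq_ofAdd_one (g : Multiplicative (ZMod 2)) :
    g = 1 ∨ g = Multiplicative.ofAdd 1 := by
  revert g
  decide

namespace Axy

variable {k : Type} [Field k]

theorem xbar_mul_ybar : xbar k * ybar k = 0 := by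
  rw [xbar, ybar, ← map_mul, Ideal.Quotient.eq_zero_iff_mem]
  exact Ideal.subset_span rfl

theorem ybar_mul_xbar : ybar k * xbar k = 0 := by rw [mul_comm, xbar_mul_ybar]

section lift

variable {B : Type*} [CommSemiring B] [Algebra k B]

def lift (u v : B) (huv : u * v = 0) : Axy k →ₐ[k] B :=
  Ideal.Quotient.liftₐ _ (aeval ![u, v]) fun a ha => by
    obtain ⟨c, rfl⟩ := Ideal.mem_span_singleton'.mp ha
    simp [huv]

theorem lift_mk (u v : B) (huv : u * v = 0) (f : MvPolynomial (Fin 2) k) :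
    lift u v huv (Ideal.Quotient.mk _ f) = aeval ![u, v] f :=
  rfl

@[simp]
theorem lift_xbar (u v : B) (huv : u * v = 0) : lift u v huv (xbar k) = u := by
  simp [xbar, lift_mk]

@[simp]
theorem lift_ybar (u v : B) (huv : u * v = 0) : lift u v huv (ybar k) = v := by
  simp [ybar, lift_mk]

end lift

theorem algHom_ext {B : Type*} [Semiring B] [Algebra k B] {f g : Axy k →ₐ[k] B}
    (hx : f (xbar k) = g (xbar k)) (hy : f (ybar k) = g (ybar k)) : f = g := by
  refine Ideal.Quotient.algHom_ext _ (MvPolynomial.algHom_ext fun i => ?_)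
  fin_cases i
  exacts [hx, hy]

theorem algEquiv_ext {F G : Axy k ≃ₐ[k] Axy k}
    (hx : F (xbar k) = G (xbar k)) (hy : F (ybar k) = G (ybar k)) : F = G :=
  AlgEquiv.coe_toAlgHom_injective (algHom_ext hx hy)

theorem adjoin_xbar_ybar : Algebra.adjoin k {xbar k, ybar k} = ⊤ := by
  have himage : Ideal.Quotient.mkₐ k _ '' Set.range (X : Fin 2 → MvPolynomial (Fin 2) k) =
      {xbar k, ybar k} := by
    ext a
    simp [Fin.exists_fin_two, xbar, ybar, eq_comm]
  rw [← himage, ← AlgHom.map_adjoin, MvPolynomial.adjoin_range_X, Algebra.map_top,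
    AlgHom.range_eq_top]
  exact Ideal.Quotient.mkₐ_surjective k _

def projX : Axy k →ₐ[k] k[X] := lift Polynomial.X 0 (mul_zero _)

def projY : Axy k →ₐ[k] k[X] := lift 0 Polynomial.X (zero_mul _)

@[simp] theorem projX_xbar : projX (xbar k) = Polynomial.X := lift_xbar ..
@[simp] theorem projX_ybar : projX (ybar k) = 0 := lift_ybar ..
@[simp] theorem projY_xbar : projY (xbar k) = 0 := lift_xbar ..
@[simp] theorem projY_ybar : projY (ybar k) = Polynomial.X := lift_ybar ..

theorem coeff_projX_mk (f : MvPolynomial (Fin 2) k) (n : ℕ) :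
    (projX (Ideal.Quotient.mk _ f)).coeff n = f.coeff (Finsupp.single 0 n) := by
  have : ![Polynomial.X, 0] = (Pi.single 0 Polynomial.X : Fin 2 → k[X]) := by
    funext i; fin_cases i <;> simp
  rw [projX, lift_mk, this, coeff_aeval_piSingle_X]

theorem coeff_projY_mk (f : MvPolynomial (Fin 2) k) (n : ℕ) :
    (projY (Ideal.Quotient.mk _ f)).coeff n = f.coeff (Finsupp.single 1 n) := by
  have : ![0, Polynomial.X] = (Pi.single 1 Polynomial.X : Fin 2 → k[X]) := by
    funext i; fin_cases i <;> simp
  rw [projY, lift_mk, this, coeff_aeval_piSingle_X]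

theorem eq_zero_of_projX_eq_zero_of_projY_eq_zero {a : Axy k} (hx : projX a = 0)
    (hy : projY a = 0) : a = 0 := by
  obtain ⟨f, rfl⟩ := Ideal.Quotient.mk_surjective a
  have hxy : (X 0 * X 1 : MvPolynomial (Fin 2) k) =
      monomial (Finsupp.single 0 1 + Finsupp.single 1 1) 1 := by
    rw [X, X, monomial_mul, one_mul]
  rw [Ideal.Quotient.eq_zero_iff_mem, hxy,
    ← Set.image_singleton (f := fun s => monomial s (1 : k)), mem_ideal_span_monomial_image]
  intro m hm
  -- a monomial of `f` without `x` (resp. `y`) would survive in `projY` (resp. `projX`)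
  refine ⟨_, rfl, Finsupp.le_def.mpr (Fin.forall_fin_two.mpr ⟨?_, ?_⟩)⟩
  · have : m 0 ≠ 0 := fun h0 => mem_support_iff.mp hm <| by
      rw [show m = Finsupp.single 1 (m 1) by ext i; fin_cases i <;> simp [h0], ← coeff_projY_mk,
        hy, Polynomial.coeff_zero]
    simpa [Nat.one_le_iff_ne_zero]
  · have : m 1 ≠ 0 := fun h1 => mem_support_iff.mp hm <| by
      rw [show m = Finsupp.single 0 (m 0) by ext i; fin_cases i <;> simp [h1], ← coeff_projX_mk,
        hx, Polynomial.coeff_zero]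
    simpa [Nat.one_le_iff_ne_zero]

theorem ext_proj {a b : Axy k} (hx : projX a = projX b) (hy : projY a = projY b) : a = b :=
  sub_eq_zero.mp <| eq_zero_of_projX_eq_zero_of_projY_eq_zero (by rw [map_sub, hx, sub_self])
    (by rw [map_sub, hy, sub_self])

theorem coeff_zero_projX_eq_coeff_zero_projY (a : Axy k) :
    (projX a).coeff 0 = (projY a).coeff 0 := by
  have : (Polynomial.aeval (0 : k)).comp projX =
      (Polynomial.aeval (0 : k)).comp (projY : Axy k →ₐ[k] k[X]) :=
    algHom_ext (by simp) (by simp)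
  rw [Polynomial.coeff_zero_eq_aeval_zero, Polynomial.coeff_zero_eq_aeval_zero]
  exact DFunLike.congr_fun this a

theorem projX_surjective : Function.Surjective (projX : Axy k →ₐ[k] k[X]) := fun p =>
  ⟨Polynomial.aeval (xbar k) p, by
    rw [← Polynomial.aeval_algHom_apply, projX_xbar, Polynomial.aeval_X_left_apply]⟩

theorem projY_surjective : Function.Surjective (projY : Axy k →ₐ[k] k[X]) := fun p =>
  ⟨Polynomial.aeval (ybar k) p, by
    rw [← Polynomial.aeval_algHom_apply, projY_ybar, Polynomial.aeval_X_left_apply]⟩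

theorem xbar_ne_zero : xbar k ≠ 0 := fun h =>
  Polynomial.X_ne_zero (R := k) (by simpa using congrArg projX h)

theorem ybar_ne_zero : ybar k ≠ 0 := fun h =>
  Polynomial.X_ne_zero (R := k) (by simpa using congrArg projY h)

theorem xbar_ne_smul_ybar (c : k) : xbar k ≠ c • ybar k := fun h =>
  Polynomial.X_ne_zero (R := k) (by simpa using congrArg projX h)

def swap : Axy k ≃ₐ[k] Axy k :=
  have hinv : (lift (ybar k) (xbar k) ybar_mul_xbar).comp
      (lift (ybar k) (xbar k) ybar_mul_xbar) = AlgHom.id k (Axy k) :=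
    algHom_ext (by simp) (by simp)
  AlgEquiv.ofAlgHom _ _ hinv hinv

@[simp] theorem swap_xbar : swap (xbar k) = ybar k := lift_xbar _ _ ybar_mul_xbar
@[simp] theorem swap_ybar : swap (ybar k) = xbar k := lift_ybar _ _ ybar_mul_xbar

theorem swap_mul_swap : swap * swap = (1 : Axy k ≃ₐ[k] Axy k) :=
  algEquiv_ext (by simp) (by simp)

section classification

variable {F : Axy k ≃ₐ[k] Axy k}

theorem exists_eq_smul_xbar (hy : projX (F (ybar k)) = 0) (hx : projY (F (xbar k)) = 0) :
    ∃ α : kˣ, F (xbar k) = (α : k) • xbar k := by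
  have hgen : Algebra.adjoin k {projX (F (xbar k))} = ⊤ :=
    Algebra.adjoin_apply_eq_top_of_surjective adjoin_xbar_ybar (G := projX.comp F.toAlgHom)
      (projX_surjective.comp F.surjective) hy
  obtain ⟨α, hα⟩ := Polynomial.exists_unit_smul_X_of_adjoin_singleton_eq_top hgen
    (by rw [coeff_zero_projX_eq_coeff_zero_projY, hx, Polynomial.coeff_zero])
  exact ⟨α, ext_proj (by simp [hα]) (by simp [hx])⟩

theorem exists_eq_smul_ybar (hy : projX (F (ybar k)) = 0) (hx : projY (F (xbar k)) = 0) :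
    ∃ β : kˣ, F (ybar k) = (β : k) • ybar k := by
  have hgen : Algebra.adjoin k {projY (F (ybar k))} = ⊤ :=
    Algebra.adjoin_apply_eq_top_of_surjective (Set.pair_comm (xbar k) _ ▸ adjoin_xbar_ybar)
      (G := projY.comp F.toAlgHom) (projY_surjective.comp F.surjective) hx
  obtain ⟨β, hβ⟩ := Polynomial.exists_unit_smul_X_of_adjoin_singleton_eq_top hgen
    (by rw [← coeff_zero_projX_eq_coeff_zero_projY, hy, Polynomial.coeff_zero])
  exact ⟨β, ext_proj (by simp [hy]) (by simp [hβ])⟩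

theorem diagonal_or_antidiagonal (F : Axy k ≃ₐ[k] Axy k) :
    (∃ α β : kˣ, F (xbar k) = (α : k) • xbar k ∧ F (ybar k) = (β : k) • ybar k) ∨
      (∃ α β : kˣ, F (xbar k) = (α : k) • ybar k ∧ F (ybar k) = (β : k) • xbar k) := by
  have hFx : F (xbar k) ≠ 0 := (map_ne_zero_iff F F.injective).mpr xbar_ne_zero
  have hFy : F (ybar k) ≠ 0 := (map_ne_zero_iff F F.injective).mpr ybar_ne_zero
  have hFxy : F (xbar k) * F (ybar k) = 0 := by rw [← map_mul, xbar_mul_ybar, map_zero]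
  have hX : projX (F (xbar k)) = 0 ∨ projX (F (ybar k)) = 0 :=
    mul_eq_zero.mp (by rw [← map_mul, hFxy, map_zero])
  have hY : projY (F (xbar k)) = 0 ∨ projY (F (ybar k)) = 0 :=
    mul_eq_zero.mp (by rw [← map_mul, hFxy, map_zero])
  rcases hX with hXx | hXy <;> rcases hY with hYx | hYy
  · exact absurd (eq_zero_of_projX_eq_zero_of_projY_eq_zero hXx hYx) hFx
  · have hXx' : projX ((swap.trans F) (ybar k)) = 0 := by simpa using hXx
    have hYy' : projY ((swap.trans F) (xbar k)) = 0 := by simpa using hYy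
    obtain ⟨α, hα⟩ := exists_eq_smul_xbar hXx' hYy'
    obtain ⟨β, hβ⟩ := exists_eq_smul_ybar hXx' hYy'
    simp only [AlgEquiv.trans_apply, swap_xbar, swap_ybar] at hα hβ
    exact Or.inr ⟨β, α, hβ, hα⟩
  · obtain ⟨α, hα⟩ := exists_eq_smul_xbar hXy hYx
    obtain ⟨β, hβ⟩ := exists_eq_smul_ybar hXy hYx
    exact Or.inl ⟨α, β, hα, hβ⟩
  · exact absurd (eq_zero_of_projX_eq_zero_of_projY_eq_zero hXy hYy) hFy

end classification

theorem smul_xbar_mul_smul_ybar (a b : k) : (a • xbar k) * (b • ybar k) = 0 := by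
  rw [smul_mul_smul_comm, xbar_mul_ybar, smul_zero]

def scaleEnd : kˣ × kˣ →* (Axy k →ₐ[k] Axy k) where
  toFun p := lift ((p.1 : k) • xbar k) ((p.2 : k) • ybar k) (smul_xbar_mul_smul_ybar _ _)
  map_one' := algHom_ext (by simp) (by simp)
  map_mul' p q := algHom_ext (by simp [smul_smul, mul_comm]) (by simp [smul_smul, mul_comm])

def scale : kˣ × kˣ →* (Axy k ≃ₐ[k] Axy k) :=
  (AlgEquiv.algHomUnitsEquiv k (Axy k)).toMonoidHom.comp scaleEnd.toHomUnits

@[simp] theorem scale_xbar (p : kˣ × kˣ) : scale p (xbar k) = (p.1 : k) • xbar k :=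
  lift_xbar _ _ (smul_xbar_mul_smul_ybar _ _)
@[simp] theorem scale_ybar (p : kˣ × kˣ) : scale p (ybar k) = (p.2 : k) • ybar k :=
  lift_ybar _ _ (smul_xbar_mul_smul_ybar _ _)

theorem swapHom_ofAdd_one : swapHom k (Multiplicative.ofAdd 1) = MulEquiv.prodComm :=
  pow_one _

def swapPow : Multiplicative (ZMod 2) →* (Axy k ≃ₐ[k] Axy k) :=
  powZModTwoHom swap swap_mul_swap

theorem scale_swapHom (g : Multiplicative (ZMod 2)) :
    scale.comp (swapHom k g).toMonoidHom = (MulAut.conj (swapPow g)).toMonoidHom.comp scale := by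
  rcases Multiplicative.zmodTwo_eq_one_or_eq_ofAdd_one g with rfl | rfl
  · ext p : 1
    simp
  · ext p : 1
    have hinv : swap⁻¹ = (swap : Axy k ≃ₐ[k] Axy k) :=
      inv_eq_of_mul_eq_one_right swap_mul_swap
    refine algEquiv_ext ?_ ?_ <;> simp [swapPow, swapHom_ofAdd_one, hinv, AlgEquiv.mul_apply]

def autHom :
    (kˣ × kˣ) ⋊[swapHom k] Multiplicative (ZMod 2) →* (Axy k ≃ₐ[k] Axy k) :=
  SemidirectProduct.lift scale swapPow scale_swapHom

theorem autHom_inl (p : kˣ × kˣ) : autHom (SemidirectProduct.inl p) = scale p :=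
  SemidirectProduct.lift_inl ..

theorem autHom_inr (g : Multiplicative (ZMod 2)) :
    autHom (k := k) (SemidirectProduct.inr g) = swapPow g :=
  SemidirectProduct.lift_inr ..

theorem autHom_injective : Function.Injective (autHom (k := k)) := by
  refine (injective_iff_map_eq_one _).mpr fun u hu => ?_
  rw [← SemidirectProduct.inl_left_mul_inr_right u, map_mul, autHom_inl, autHom_inr] at hu
  rcases Multiplicative.zmodTwo_eq_one_or_eq_ofAdd_one u.right with hg | hg <;>
    rw [hg] at hu
  · rw [map_one, mul_one] at hu
    have h1 : (u.left.1 : k) • xbar k = (1 : k) • xbar k := by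
      simpa using congrArg (fun F : Axy k ≃ₐ[k] Axy k => F (xbar k)) hu
    have h2 : (u.left.2 : k) • ybar k = (1 : k) • ybar k := by
      simpa using congrArg (fun F : Axy k ≃ₐ[k] Axy k => F (ybar k)) hu
    refine SemidirectProduct.ext (Prod.ext ?_ ?_) hg
    · exact Units.val_eq_one.mp (smul_left_injective k xbar_ne_zero h1)
    · exact Units.val_eq_one.mp (smul_left_injective k ybar_ne_zero h2)
  · have h := congrArg (fun F : Axy k ≃ₐ[k] Axy k => F (xbar k)) hu
    simp [swapPow, AlgEquiv.mul_apply] at h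
    exact absurd h.symm (xbar_ne_smul_ybar _)

theorem autHom_surjective : Function.Surjective (autHom (k := k)) := by
  intro F
  rcases diagonal_or_antidiagonal F with ⟨α, β, hx, hy⟩ | ⟨α, β, hx, hy⟩
  · exact ⟨SemidirectProduct.inl (α, β),
      algEquiv_ext (by simp [autHom_inl, hx]) (by simp [autHom_inl, hy])⟩
  · refine ⟨SemidirectProduct.inl (β, α) * SemidirectProduct.inr (Multiplicative.ofAdd 1),
      ?_⟩
    rw [map_mul, autHom_inl, autHom_inr]
    exact algEquiv_ext (by simp [swapPow, AlgEquiv.mul_apply, hx])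
      (by simp [swapPow, AlgEquiv.mul_apply, hy])

end Axy

/-- For `A = k[x,y]/(xy)`, the group of `k`-algebra automorphisms of `A` is
isomorphic to `(kˣ × kˣ) ⋊ ℤ/2`, where `(α,β)` acts by `x ↦ αx`, `y ↦ βy` and the
generator of `ℤ/2` exchanges `x` and `y`.  In particular, every `k`-algebra automorphism
`F` of `A` satisfies either `F(x) = αx, F(y) = βy` or `F(x) = αy, F(y) = βx` for some
`α, β ∈ kˣ`. -/
theorem stmt_2 (k : Type) [Field k] :
    Nonempty ((Axy k ≃ₐ[k] Axy k) ≃*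
      SemidirectProduct (kˣ × kˣ) (Multiplicative (ZMod 2)) (swapHom k)) ∧
    ∀ F : Axy k ≃ₐ[k] Axy k,
      (∃ α β : kˣ, F (xbar k) = (α : k) • xbar k ∧ F (ybar k) = (β : k) • ybar k) ∨
      (∃ α β : kˣ, F (xbar k) = (α : k) • ybar k ∧ F (ybar k) = (β : k) • xbar k) :=
  ⟨⟨(MulEquiv.ofBijective Axy.autHom ⟨Axy.autHom_injective, Axy.autHom_surjective⟩).symm⟩,
    Axy.diagonal_or_antidiagonal⟩

end
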